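/- Let S be a numerical semigroup with multiplicity 4 and Kunz-coordinates vector (x_1, x_2, x_3) ∈ ℕ³. Then S is 4-irreducible if and only if one of the following holds: (1) x_1 = x_2 = x_3 = 1; (2) x_1 + x_2 ≥ x_3 + 1, 2x_1 ≥ x_2 + 2, and x_2 + x_3 ≤ x_1 - 1; (3) x_1 + x_2 ≥ x_3 + 1, 2x_1 ≥ x_2 + 2, x_2 = 1 and 2x_3 ≤ x_2; (4) x_1 + x_2 ≥ x_3 + 1, 2x_1 ≥ x_2 + 2, x_2 = 1 and x_2 + x_3 ≤ x_1 - 1; (5) x_1 = 2, x_2 = x_3 = 1; (6) x_1 + x_2 ≥ x_3 + 1, x_2 + x_3 ≥ x_1, 2x_1 ≤ x_2 + 1 and 2x_3 ≤ x_2; (7) x_2 + x_3 ≥ x_1, 2x_3 ≥ x_2 + 1, and x_1 + x_2 ≤ x_3. -/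

import Mathlib

/-- A numerical semigroup: a subset of ℕ containing 0, closed under addition,
with finite complement. -/
def IsNumSgp (S : Set ℕ) : Prop :=
  0 ∈ S ∧ (∀ a ∈ S, ∀ b ∈ S, a + b ∈ S) ∧ (Sᶜ).Finite

/-- Multiplicity: least positive element. -/
noncomputable def nsMult (S : Set ℕ) : ℕ := sInf {n | n ∈ S ∧ 0 < n}

/-- Frobenius number: largest integer not in S. -/
noncomputable def nsFrob (S : Set ℕ) : ℕ := sSup Sᶜ

/-- Genus: number of gaps. -/
noncomputable def nsGenus (S : Set ℕ) : ℕ := Sᶜ.ncard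

/-- Special gaps of S. -/
def nsSG (S : Set ℕ) : Set ℕ := {h | h ∉ S ∧ IsNumSgp (S ∪ {h})}

/-- Special gaps of S larger than m. -/
def nsSGm (m : ℕ) (S : Set ℕ) : Set ℕ := {h ∈ nsSG S | m < h}

/-- S is irreducible: not an intersection of two numerical semigroups properly containing it. -/
def nsIrr (S : Set ℕ) : Prop :=
  ¬ ∃ T₁ T₂ : Set ℕ, IsNumSgp T₁ ∧ IsNumSgp T₂ ∧ S ⊂ T₁ ∧ S ⊂ T₂ ∧ S = T₁ ∩ T₂

/-- S is m-irreducible: not an intersection of two numerical semigroups of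
multiplicity m properly containing it. -/
def nsMIrr (m : ℕ) (S : Set ℕ) : Prop :=
  ¬ ∃ T₁ T₂ : Set ℕ, IsNumSgp T₁ ∧ IsNumSgp T₂ ∧ nsMult T₁ = m ∧ nsMult T₂ = m ∧
      S ⊂ T₁ ∧ S ⊂ T₂ ∧ S = T₁ ∩ T₂

/-- Symmetric: irreducible with odd Frobenius number. -/
def nsSym (S : Set ℕ) : Prop := nsIrr S ∧ Odd (nsFrob S)

/-- Pseudosymmetric: irreducible with even Frobenius number. -/
def nsPseudoSym (S : Set ℕ) : Prop := nsIrr S ∧ Even (nsFrob S)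

/-- m-symmetric: m-irreducible with odd Frobenius number. -/
def nsMSym (m : ℕ) (S : Set ℕ) : Prop := nsMIrr m S ∧ Odd (nsFrob S)

/-- m-pseudosymmetric: m-irreducible with even Frobenius number. -/
def nsMPseudoSym (m : ℕ) (S : Set ℕ) : Prop := nsMIrr m S ∧ Even (nsFrob S)

/-- The numerical semigroup (submonoid) generated by a set of naturals. -/
def nsGen (A : Set ℕ) : Set ℕ := (AddSubmonoid.closure A : Set ℕ)

/-- Apéry element: least element of S congruent to i mod m. -/
noncomputable def nsApery (S : Set ℕ) (m i : ℕ) : ℕ := sInf {s | s ∈ S ∧ s % m = i % m}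

/-!
A numerical semigroup of multiplicity 4 is determined by its Kunz coordinates, and these range
exactly over the integer points of the Kunz polytope. Inclusion of semigroups reverses the
componentwise order and intersection takes componentwise maxima, so `S` is 4-reducible iff its
Kunz point `x` is the maximum of two other Kunz points. Every Kunz point `y < x` stays below some
`x - eᵢ` with `yᵢ < xᵢ` that is again a Kunz point; hence `S` is 4-reducible exactly when `x - eᵢ`
is a Kunz point for two different `i`, and the seven cases are the negation of that condition
written out.
-/

section Apery

variable {S : Set ℕ}

theorem IsNumSgp.exists_forall_le_mem (hS : IsNumSgp S) : ∃ N, ∀ n, N ≤ n → n ∈ S := by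
  obtain ⟨N, hN⟩ := hS.2.2.bddAbove
  exact ⟨N + 1, fun n hn => by_contra fun h => by have := hN h; omega⟩

theorem IsNumSgp.mul_mem (hS : IsNumSgp S) {s : ℕ} (hs : s ∈ S) (k : ℕ) : k * s ∈ S := by
  induction k with
  | zero => simpa using hS.1
  | succ k ih => simpa [Nat.succ_mul] using hS.2.1 _ ih _ hs

theorem IsNumSgp.nsMult_mem (hS : IsNumSgp S) : nsMult S ∈ S := by
  obtain ⟨N, hN⟩ := hS.exists_forall_le_mem
  exact (Nat.sInf_mem (s := {n | n ∈ S ∧ 0 < n}) ⟨N + 1, hN _ (by omega), by omega⟩).1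

theorem nsMult_le {s : ℕ} (hs : s ∈ S) (hpos : 0 < s) : nsMult S ≤ s :=
  Nat.sInf_le ⟨hs, hpos⟩

variable {m : ℕ}

theorem IsNumSgp.nsApery_mem_and_mod (hS : IsNumSgp S) (hm : 0 < m) (i : ℕ) :
    nsApery S m i ∈ S ∧ nsApery S m i % m = i % m := by
  obtain ⟨N, hN⟩ := hS.exists_forall_le_mem
  refine Nat.sInf_mem (s := {s | s ∈ S ∧ s % m = i % m}) ⟨m * N + i % m, hN _ ?_, by simp⟩
  exact (Nat.le_mul_of_pos_left N hm).trans (Nat.le_add_right _ _)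

theorem nsApery_le {i s : ℕ} (hs : s ∈ S) (hsi : s % m = i % m) : nsApery S m i ≤ s :=
  Nat.sInf_le ⟨hs, hsi⟩

theorem IsNumSgp.mem_iff_nsApery_le (hS : IsNumSgp S) (hm : 0 < m) (hmS : m ∈ S) (n : ℕ) :
    n ∈ S ↔ nsApery S m n ≤ n := by
  refine ⟨fun hn => nsApery_le hn rfl, fun hle => ?_⟩
  obtain ⟨hw, hwmod⟩ := hS.nsApery_mem_and_mod hm n
  have hn : n = nsApery S m n + (n - nsApery S m n) / m * m := by
    rw [Nat.div_mul_cancel (Nat.dvd_of_mod_eq_zero (Nat.sub_mod_eq_zero_of_mod_eq hwmod.symm))]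
    omega
  rw [hn]
  exact hS.2.1 _ hw _ (hS.mul_mem hmS _)

end Apery

def kunzSet (a b c : ℕ) : Set ℕ :=
  {n | n % 4 = 0 ∨ (n % 4 = 1 ∧ 4 * a + 1 ≤ n) ∨ (n % 4 = 2 ∧ 4 * b + 2 ≤ n) ∨
    (n % 4 = 3 ∧ 4 * c + 3 ≤ n)}

/-- The Kunz inequalities for multiplicity 4: the Apéry elements `w i = 4 x_i + i` satisfy
`w i + w j ≥ w (i + j mod 4)`, and `x_i ≥ 1` says that 4 is the least positive element. -/
def IsKunz (a b c : ℕ) : Prop :=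
  1 ≤ a ∧ 1 ≤ b ∧ 1 ≤ c ∧ b ≤ 2 * a ∧ c ≤ a + b ∧ a ≤ b + c + 1 ∧ b ≤ 2 * c + 1

section KunzSet

variable {a b c a' b' c' : ℕ}

theorem isNumSgp_kunzSet (h : IsKunz a b c) : IsNumSgp (kunzSet a b c) := by
  obtain ⟨-, -, -, h4, h5, h6, h7⟩ := h
  refine ⟨by simp [kunzSet], fun m hm n hn => ?_, ?_⟩
  · simp only [kunzSet, Set.mem_ofPred_eq] at hm hn ⊢
    omega
  · refine (Set.finite_Iio (4 * (a + b + c) + 4)).subset fun n hn => ?_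
    simp only [kunzSet, Set.mem_compl_iff, Set.mem_ofPred_eq, Set.mem_Iio] at hn ⊢
    omega

theorem nsMult_kunzSet (h : IsKunz a b c) : nsMult (kunzSet a b c) = 4 := by
  obtain ⟨h1, h2, h3, -⟩ := h
  refine le_antisymm (nsMult_le (by simp [kunzSet]) (by norm_num))
    (le_csInf ⟨4, by simp [kunzSet]⟩ ?_)
  rintro n ⟨hn, hpos⟩
  simp only [kunzSet, Set.mem_ofPred_eq] at hn
  omega

theorem kunzSet_subset_kunzSet_iff :
    kunzSet a b c ⊆ kunzSet a' b' c' ↔ a' ≤ a ∧ b' ≤ b ∧ c' ≤ c := by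
  constructor
  · intro h
    have h1 := h (show 4 * a + 1 ∈ kunzSet a b c by simp [kunzSet])
    have h2 := h (show 4 * b + 2 ∈ kunzSet a b c by simp [kunzSet])
    have h3 := h (show 4 * c + 3 ∈ kunzSet a b c by simp [kunzSet])
    simp only [kunzSet, Set.mem_ofPred_eq] at h1 h2 h3
    omega
  · intro h n hn
    simp only [kunzSet, Set.mem_ofPred_eq] at hn ⊢
    omega

theorem kunzSet_inj : kunzSet a b c = kunzSet a' b' c' ↔ a = a' ∧ b = b' ∧ c = c' := by
  rw [Set.Subset.antisymm_iff, kunzSet_subset_kunzSet_iff, kunzSet_subset_kunzSet_iff]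
  omega

theorem kunzSet_ssubset_kunzSet_iff : kunzSet a b c ⊂ kunzSet a' b' c' ↔
    a' ≤ a ∧ b' ≤ b ∧ c' ≤ c ∧ ¬(a' = a ∧ b' = b ∧ c' = c) := by
  rw [Set.ssubset_iff_subset_ne, kunzSet_subset_kunzSet_iff, Ne, kunzSet_inj]
  omega

theorem kunzSet_inter_kunzSet :
    kunzSet a b c ∩ kunzSet a' b' c' = kunzSet (max a a') (max b b') (max c c') := by
  ext n
  simp only [kunzSet, Set.mem_inter_iff, Set.mem_ofPred_eq]
  omega

end KunzSet

section MultiplicityFour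

variable {S : Set ℕ} {a b c : ℕ}

theorem IsNumSgp.eq_kunzSet (hS : IsNumSgp S) (hm : nsMult S = 4)
    (h1 : nsApery S 4 1 = 4 * a + 1) (h2 : nsApery S 4 2 = 4 * b + 2)
    (h3 : nsApery S 4 3 = 4 * c + 3) : S = kunzSet a b c := by
  have h4 : 4 ∈ S := hm ▸ hS.nsMult_mem
  have h0 : nsApery S 4 0 = 0 := Nat.le_zero.mp (nsApery_le hS.1 rfl)
  ext n
  rw [hS.mem_iff_nsApery_le (by norm_num) h4,
    show nsApery S 4 n = nsApery S 4 (n % 4) by simp [nsApery]]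
  have : n % 4 < 4 := Nat.mod_lt _ (by norm_num)
  simp only [kunzSet, Set.mem_ofPred_eq]
  interval_cases h : n % 4 <;> simp [*]

theorem IsNumSgp.isKunz (hS : IsNumSgp S) (hm : nsMult S = 4)
    (h1 : nsApery S 4 1 = 4 * a + 1) (h2 : nsApery S 4 2 = 4 * b + 2)
    (h3 : nsApery S 4 3 = 4 * c + 3) : IsKunz a b c := by
  have hw := fun i => (hS.nsApery_mem_and_mod (m := 4) (by norm_num) i).1
  have hge : ∀ s ∈ S, 0 < s → 4 ≤ s := fun s hs hpos => hm ▸ nsMult_le hs hpos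
  have hsum : ∀ i j k, (nsApery S 4 i + nsApery S 4 j) % 4 = k % 4 →
      nsApery S 4 k ≤ nsApery S 4 i + nsApery S 4 j :=
    fun i j k h => nsApery_le (hS.2.1 _ (hw i) _ (hw j)) h
  have ha := hge _ (hw 1) (by omega)
  have hb := hge _ (hw 2) (by omega)
  have hc := hge _ (hw 3) (by omega)
  have h11 := hsum 1 1 2 (by omega)
  have h12 := hsum 1 2 3 (by omega)
  have h23 := hsum 2 3 1 (by omega)
  have h33 := hsum 3 3 2 (by omega)
  exact ⟨by omega, by omega, by omega, by omega, by omega, by omega, by omega⟩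

theorem IsNumSgp.exists_isKunz_eq_kunzSet (hS : IsNumSgp S) (hm : nsMult S = 4) :
    ∃ a b c, IsKunz a b c ∧ S = kunzSet a b c := by
  have hmod := hS.nsApery_mem_and_mod (m := 4) (by norm_num)
  have h1 := hmod 1; have h2 := hmod 2; have h3 := hmod 3
  have e1 : nsApery S 4 1 = 4 * (nsApery S 4 1 / 4) + 1 := by omega
  have e2 : nsApery S 4 2 = 4 * (nsApery S 4 2 / 4) + 2 := by omega
  have e3 : nsApery S 4 3 = 4 * (nsApery S 4 3 / 4) + 3 := by omega
  exact ⟨_, _, _, hS.isKunz hm e1 e2 e3, hS.eq_kunzSet hm e1 e2 e3⟩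

end MultiplicityFour

section Irreducibility

variable {a b c : ℕ}

def IsKunzReducible (a b c : ℕ) : Prop :=
  ∃ y₁ y₂ y₃ z₁ z₂ z₃, IsKunz y₁ y₂ y₃ ∧ IsKunz z₁ z₂ z₃ ∧ ¬(y₁ = a ∧ y₂ = b ∧ y₃ = c) ∧
    ¬(z₁ = a ∧ z₂ = b ∧ z₃ = c) ∧ max y₁ z₁ = a ∧ max y₂ z₂ = b ∧ max y₃ z₃ = c

theorem nsMIrr_four_kunzSet_iff : nsMIrr 4 (kunzSet a b c) ↔ ¬IsKunzReducible a b c := by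
  refine not_congr ⟨?_, ?_⟩
  · rintro ⟨T₁, T₂, hT₁, hT₂, hm₁, hm₂, hs₁, hs₂, heq⟩
    obtain ⟨y₁, y₂, y₃, hy, rfl⟩ := hT₁.exists_isKunz_eq_kunzSet hm₁
    obtain ⟨z₁, z₂, z₃, hz, rfl⟩ := hT₂.exists_isKunz_eq_kunzSet hm₂
    rw [kunzSet_ssubset_kunzSet_iff] at hs₁ hs₂
    rw [kunzSet_inter_kunzSet, kunzSet_inj] at heq
    exact ⟨y₁, y₂, y₃, z₁, z₂, z₃, hy, hz, by omega, by omega, by omega, by omega, by omega⟩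
  · rintro ⟨y₁, y₂, y₃, z₁, z₂, z₃, hy, hz, hny, hnz, h₁, h₂, h₃⟩
    refine ⟨_, _, isNumSgp_kunzSet hy, isNumSgp_kunzSet hz, nsMult_kunzSet hy, nsMult_kunzSet hz,
      ?_, ?_, ?_⟩
    · rw [kunzSet_ssubset_kunzSet_iff]; omega
    · rw [kunzSet_ssubset_kunzSet_iff]; omega
    · rw [kunzSet_inter_kunzSet, kunzSet_inj]; omega

theorem IsKunz.exists_lower_of_lt {y₁ y₂ y₃ : ℕ} (hx : IsKunz a b c) (hy : IsKunz y₁ y₂ y₃)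
    (h₁ : y₁ ≤ a) (h₂ : y₂ ≤ b) (h₃ : y₃ ≤ c) (hne : ¬(y₁ = a ∧ y₂ = b ∧ y₃ = c)) :
    (y₁ < a ∧ IsKunz (a - 1) b c) ∨ (y₂ < b ∧ IsKunz a (b - 1) c) ∨
      (y₃ < c ∧ IsKunz a b (c - 1)) := by
  unfold IsKunz at *
  omega

theorem IsKunz.isKunzReducible_iff (hx : IsKunz a b c) : IsKunzReducible a b c ↔
    (IsKunz (a - 1) b c ∧ IsKunz a (b - 1) c) ∨ (IsKunz (a - 1) b c ∧ IsKunz a b (c - 1)) ∨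
      (IsKunz a (b - 1) c ∧ IsKunz a b (c - 1)) := by
  constructor
  · rintro ⟨y₁, y₂, y₃, z₁, z₂, z₃, hy, hz, hny, hnz, h₁, h₂, h₃⟩
    have hy' := hx.exists_lower_of_lt hy (by omega) (by omega) (by omega) hny
    have hz' := hx.exists_lower_of_lt hz (by omega) (by omega) (by omega) hnz
    rcases hy' with ⟨hy₁, hA⟩ | ⟨hy₂, hB⟩ | ⟨hy₃, hC⟩ <;>
      rcases hz' with ⟨hz₁, hA'⟩ | ⟨hz₂, hB'⟩ | ⟨hz₃, hC'⟩ <;>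
      first | (exfalso; omega) | tauto
  · obtain ⟨ha, hb, hc, -⟩ := hx
    rintro (⟨hA, hB⟩ | ⟨hA, hC⟩ | ⟨hB, hC⟩)
    · exact ⟨a - 1, b, c, a, b - 1, c, hA, hB, by omega, by omega, by omega, by omega, by omega⟩
    · exact ⟨a - 1, b, c, a, b, c - 1, hA, hC, by omega, by omega, by omega, by omega, by omega⟩
    · exact ⟨a, b - 1, c, a, b, c - 1, hB, hC, by omega, by omega, by omega, by omega, by omega⟩

theorem IsKunz.isKunz_sub_one_fst_iff (hx : IsKunz a b c) :
    IsKunz (a - 1) b c ↔ 2 ≤ a ∧ b + 2 ≤ 2 * a ∧ c + 1 ≤ a + b := by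
  unfold IsKunz at *
  omega

theorem IsKunz.isKunz_sub_one_snd_iff (hx : IsKunz a b c) :
    IsKunz a (b - 1) c ↔ 2 ≤ b ∧ c + 1 ≤ a + b ∧ a ≤ b + c := by
  unfold IsKunz at *
  omega

theorem IsKunz.isKunz_sub_one_thd_iff (hx : IsKunz a b c) :
    IsKunz a b (c - 1) ↔ 2 ≤ c ∧ a ≤ b + c ∧ b + 1 ≤ 2 * c := by
  unfold IsKunz at *
  omega

theorem IsKunz.not_isKunzReducible_iff (hx : IsKunz a b c) : ¬IsKunzReducible a b c ↔
      (a = 1 ∧ b = 1 ∧ c = 1) ∨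
      (a + b ≥ c + 1 ∧ 2 * a ≥ b + 2 ∧ b + c ≤ a - 1) ∨
      (a + b ≥ c + 1 ∧ 2 * a ≥ b + 2 ∧ b = 1 ∧ 2 * c ≤ b) ∨
      (a + b ≥ c + 1 ∧ 2 * a ≥ b + 2 ∧ b = 1 ∧ b + c ≤ a - 1) ∨
      (a = 2 ∧ b = 1 ∧ c = 1) ∨
      (a + b ≥ c + 1 ∧ b + c ≥ a ∧ 2 * a ≤ b + 1 ∧ 2 * c ≤ b) ∨
      (b + c ≥ a ∧ 2 * c ≥ b + 1 ∧ a + b ≤ c) := by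
  rw [hx.isKunzReducible_iff, hx.isKunz_sub_one_fst_iff, hx.isKunz_sub_one_snd_iff,
    hx.isKunz_sub_one_thd_iff]
  obtain ⟨h₁, h₂, h₃, h₄, h₅, h₆, h₇⟩ := hx
  constructor
  · intro h
    -- splitting along the four facets keeps omega's case analysis small
    rcases le_or_gt (c + 1) (a + b) with A | A <;>
    rcases le_or_gt (b + 2) (2 * a) with B | B <;>
    rcases le_or_gt a (b + c) with C | C <;>
    rcases le_or_gt (b + 1) (2 * c) with D | D <;>
    omega
  · rintro (h | h | h | h | h | h | h) <;> omega

end Irreducibility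

/-- 4-irreducibility of a multiplicity-4 numerical semigroup in
terms of its Kunz coordinates. -/
theorem stmt16 (S : Set ℕ) (x1 x2 x3 : ℕ) (hS : IsNumSgp S) (hm : nsMult S = 4)
    (h1 : nsApery S 4 1 = 4 * x1 + 1) (h2 : nsApery S 4 2 = 4 * x2 + 2)
    (h3 : nsApery S 4 3 = 4 * x3 + 3) :
    nsMIrr 4 S ↔
      (x1 = 1 ∧ x2 = 1 ∧ x3 = 1) ∨
      (x1 + x2 ≥ x3 + 1 ∧ 2 * x1 ≥ x2 + 2 ∧ x2 + x3 ≤ x1 - 1) ∨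
      (x1 + x2 ≥ x3 + 1 ∧ 2 * x1 ≥ x2 + 2 ∧ x2 = 1 ∧ 2 * x3 ≤ x2) ∨
      (x1 + x2 ≥ x3 + 1 ∧ 2 * x1 ≥ x2 + 2 ∧ x2 = 1 ∧ x2 + x3 ≤ x1 - 1) ∨
      (x1 = 2 ∧ x2 = 1 ∧ x3 = 1) ∨
      (x1 + x2 ≥ x3 + 1 ∧ x2 + x3 ≥ x1 ∧ 2 * x1 ≤ x2 + 1 ∧ 2 * x3 ≤ x2) ∨
      (x2 + x3 ≥ x1 ∧ 2 * x3 ≥ x2 + 1 ∧ x1 + x2 ≤ x3) := by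
  rw [hS.eq_kunzSet hm h1 h2 h3, nsMIrr_four_kunzSet_iff]
  exact (hS.isKunz hm h1 h2 h3).not_isKunzReducible_iff
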